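/- For multi-indices α = (α_1,...,α_p) ∈ ℤ_+^p with ∑_r α_r ≤ m−1, one has ∑_{j ∈ {1,...,m}^p} γ_{m,j} · j^{2α+1} = [α = 0], where γ_{m,j} := ∏_r γ_{m,j_r}, γ_{m,j} := (-1)^{j-1}(2/j)C(2m,m+j)/C(2m,m), and j^{2α+1} := ∏_r j_r^{2α_r+1}. -/

import Mathlib

/-!
The `2m`-th finite difference of the polynomial `(k - m) ^ (2a)` vanishes when `a < m`, i.e.
`∑_{k=0}^{2m} (-1)^k C(2m,k) (k - m)^(2a) = 0`. The summand is symmetric about `k = m`, so folding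
the sum there gives `2 ∑_{j=1}^m (-1)^j C(2m,m+j) j^(2a) = -C(2m,m) [a = 0]`, which is the
one-dimensional identity `∑_j γ_{m,j} j^(2a+1) = [a = 0]`. The `p`-dimensional sum is a product
of one-dimensional ones.
-/

noncomputable def gam (m j : ℕ) : ℝ :=
  (-1) ^ (j - 1) * (2 / j) * (Nat.choose (2 * m) (m + j)) / (Nat.choose (2 * m) m)

open Finset

theorem neg_one_pow_sub_of_le {R : Type*} [Ring R] {n k : ℕ} (h : k ≤ n) :
    (-1 : R) ^ (n - k) = (-1) ^ n * (-1) ^ k := by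
  conv_rhs => rw [← Nat.sub_add_cancel h, pow_add, mul_assoc, ← pow_add, ← two_mul, pow_mul]
  simp

theorem sum_range_neg_one_pow_sub_mul_choose_mul_add_pow {R : Type*} [CommRing R] {d n : ℕ}
    (h : d < n) (c : R) :
    ∑ k ∈ range (n + 1), (-1) ^ (n - k) * n.choose k * (c + k) ^ d = 0 := by
  have := congr_fun (fwdDiff_iter_pow_eq_zero_of_lt (R := R) h) c
  rw [fwdDiff_iter_eq_sum_shift] at this
  simpa [zsmul_eq_mul, mul_assoc] using this

theorem sum_range_two_mul_add_one_of_symm {M : Type*} [AddCommMonoid M] (f : ℕ → M) (m : ℕ)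
    (hf : ∀ j ≤ m, f (m - j) = f (m + j)) :
    ∑ k ∈ range (2 * m + 1), f k = f m + 2 • ∑ j ∈ Icc 1 m, f (m + j) := by
  have hupper : ∑ j ∈ Icc 1 m, f (m + j) = ∑ k ∈ range m, f (m + 1 + k) := by
    rw [← Ico_add_one_right_eq_Icc, sum_Ico_eq_sum_range]
    simp only [add_tsub_cancel_right, add_comm 1, add_assoc]
  have hlower : ∑ k ∈ range (m + 1), f k = f m + ∑ k ∈ range m, f (m + 1 + k) := by
    rw [← sum_range_reflect, sum_range_succ', add_comm]
    refine congrArg _ (sum_congr rfl fun k hk => ?_)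
    rw [add_tsub_cancel_right, hf (k + 1) (by simp at hk; omega)]
    congr 1; omega
  rw [show 2 * m + 1 = (m + 1) + m by ring, sum_range_add, hlower, hupper, two_nsmul, add_assoc]

theorem two_mul_sum_neg_one_pow_mul_choose_mul_pow {R : Type*} [CommRing R] {m a : ℕ}
    (ha : a < m) :
    2 * ∑ j ∈ Icc 1 m, (-1 : R) ^ j * (2 * m).choose (m + j) * (j : R) ^ (2 * a) =
      -((2 * m).choose m * 0 ^ (2 * a)) := by
  set f : ℕ → R := fun k => (-1) ^ k * (2 * m).choose k * ((k : R) - m) ^ (2 * a) with hf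
  have hzero : ∑ k ∈ range (2 * m + 1), f k = 0 := by
    rw [← sum_range_neg_one_pow_sub_mul_choose_mul_add_pow (by omega : 2 * a < 2 * m) (-m : R)]
    refine sum_congr rfl fun k hk => ?_
    rw [neg_one_pow_sub_of_le (by simp at hk; omega), pow_mul]
    simp only [hf, neg_one_sq, one_pow, one_mul, neg_add_eq_sub]
  have hsymm : ∀ j ≤ m, f (m - j) = f (m + j) := by
    intro j hj
    have hneg : ((m - j : ℕ) : R) - m = -(((m + j : ℕ) : R) - m) := by
      push_cast [Nat.cast_sub hj]; ring
    simp only [hf]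
    rw [neg_one_pow_sub_of_le hj, pow_add, hneg, (even_two_mul a).neg_pow,
      Nat.choose_symm_of_eq_add (by omega : 2 * m = (m - j) + (m + j))]
  have hexpand : f m + 2 • ∑ j ∈ Icc 1 m, f (m + j) = (-1) ^ m *
      ((2 * m).choose m * 0 ^ (2 * a) +
        2 * ∑ j ∈ Icc 1 m, (-1 : R) ^ j * (2 * m).choose (m + j) * (j : R) ^ (2 * a)) := by
    simp only [hf, nsmul_eq_mul, sub_self, mul_add, mul_sum]
    push_cast
    congr 1
    · ring
    · exact sum_congr rfl fun j _ => by ring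
  rw [sum_range_two_mul_add_one_of_symm f m hsymm, hexpand, neg_one_pow_mul_eq_zero_iff] at hzero
  linear_combination hzero

theorem sum_gam_mul_pow {m a : ℕ} (ha : a < m) :
    ∑ j ∈ Icc 1 m, gam m j * (j : ℝ) ^ (2 * a + 1) = if a = 0 then 1 else 0 := by
  have hC : ((2 * m).choose m : ℝ) ≠ 0 := Nat.cast_ne_zero.2 (Nat.choose_pos (by omega)).ne'
  have hterm : ∀ j ∈ Icc 1 m, gam m j * (j : ℝ) ^ (2 * a + 1) =
      -(2 / (2 * m).choose m) * ((-1) ^ j * (2 * m).choose (m + j) * (j : ℝ) ^ (2 * a)) := by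
    intro j hj
    obtain ⟨i, rfl⟩ : ∃ i, j = i + 1 := ⟨j - 1, by simp at hj; omega⟩
    simp only [gam, add_tsub_cancel_right]
    field_simp
    ring
  rw [sum_congr rfl hterm, ← mul_sum, neg_mul, div_mul_eq_mul_div,
    two_mul_sum_neg_one_pow_mul_choose_mul_pow ha, neg_div, neg_neg, mul_div_cancel_left₀ _ hC]
  simp [zero_pow_eq]

theorem stmt9_general (p m : ℕ) (hm : 1 ≤ m) (α : Fin p → ℕ)
    (hα : ∑ r, α r ≤ m - 1) :
    ∑ j ∈ Finset.Icc (1 : Fin p → ℕ) (fun _ => m),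
      (∏ r, gam m (j r)) * ∏ r, (j r : ℝ) ^ (2 * α r + 1) =
      if α = 0 then 1 else 0 := by
  have hαr : ∀ r, α r < m := fun r => by
    have := single_le_sum (fun r _ => Nat.zero_le (α r)) (mem_univ r)
    omega
  simp_rw [← prod_mul_distrib, Pi.Icc_eq, Pi.one_apply]
  rw [← prod_univ_sum (fun _ => Icc 1 m) fun r j => gam m j * (j : ℝ) ^ (2 * α r + 1)]
  simp_rw [sum_gam_mul_pow (hαr _)]
  simp [Fintype.prod_boole, funext_iff]

theorem stmt9 (p m : ℕ) (hp : 1 ≤ p) (hm : 1 ≤ m) (α : Fin p → ℕ)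
    (hα : ∑ r, α r ≤ m - 1) :
    ∑ j ∈ Finset.Icc (1 : Fin p → ℕ) (fun _ => m),
      (∏ r, gam m (j r)) * ∏ r, (j r : ℝ) ^ (2 * α r + 1) =
      if α = 0 then 1 else 0 :=
  stmt9_general p m hm α hα
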